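/- Let a rooted tree on {1,…,d} with bond dimensions r_w (r_{r₀} = 1) be given and let p : ∏_{k=1}^d [n_k] → ℝ be the TTNS contraction of TTNS cores {G_k}_{k=1}^d. For each node k, view G_k as a 3-tensor whose middle index is x_k ∈ [n_k], whose first index is the joint children index β ∈ ∏_{w∈C(k)}[r_w], and whose third index is α_k ∈ [r_k], and set ⦀G_k⦀ := max_{x_k} ‖G_k(·,x_k,·)‖ (spectral norm of the corresponding matrix slice). Then ‖p‖_∞ := max_x |p(x)| ≤ ∏_{k=1}^d ⦀G_k⦀. -/

import Mathlib

open scoped Classical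

noncomputable section

/-- A rooted tree on the vertex set `Fin d`: a root and a parent map fixing the root,
such that every vertex reaches the root under iteration of the parent map. -/
structure ParentTree (d : ℕ) where
  root : Fin d
  parent : Fin d → Fin d
  parent_root : parent root = root
  reaches_root : ∀ v : Fin d, ∃ m : ℕ, parent^[m] v = root

namespace ParentTree

variable {d : ℕ}

/-- The children of a node `k`. -/
def children (T : ParentTree d) (k : Fin d) : Set (Fin d) :=
  {w | w ≠ T.root ∧ w ≠ k ∧ T.parent w = k}

/-- The descendants of a node `w` (the "left" set `L(w)`). -/
def desc (T : ParentTree d) (w : Fin d) : Set (Fin d) :=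
  {v | v ≠ w ∧ ∃ m : ℕ, 1 ≤ m ∧ T.parent^[m] v = w}

end ParentTree

/-- The unfolding matrix `p(x_S; x_{Sᶜ})` of a `d`-dimensional tensor `p`. -/
def unfoldMatrix {d : ℕ} {n : Fin d → ℕ} (p : (∀ i, Fin (n i)) → ℝ)
    (S : Set (Fin d)) :
    Matrix ((i : S) → Fin (n i.1)) ((j : (Sᶜ : Set (Fin d))) → Fin (n j.1)) ℝ :=
  Matrix.of fun xS xSc =>
    p fun i => if h : i ∈ S then xS ⟨i, h⟩ else xSc ⟨i, h⟩

/-- The TTNS contraction of a family of cores `G k (β, x_k, α_k)`, where `β` is the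
joint index over the children bonds of `k` and `α_k` is the bond of `k` itself. -/
def ttnsContract {d : ℕ} (T : ParentTree d) (n r : Fin d → ℕ)
    (G : ∀ k : Fin d, ((w : T.children k) → Fin (r w.1)) → Fin (n k) → Fin (r k) → ℝ) :
    (∀ i, Fin (n i)) → ℝ :=
  fun x => ∑ α : (k : Fin d) → Fin (r k), ∏ k : Fin d, G k (fun w => α w.1) (x k) (α k)


/-- The spectral norm (`ℓ² → ℓ²` operator norm) of a real matrix. -/
def specNorm {m n : Type*} [Fintype m] [Fintype n] [DecidableEq n]
    (M : Matrix m n ℝ) : ℝ :=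
  ‖LinearMap.toContinuousLinearMap (Matrix.toEuclideanLin M)‖

/-- The `⦀·⦀` norm of a 3-tensor: the maximum over the middle index of the spectral
norm of the corresponding matrix slice. -/
def tnorm {r₁ X r₂ : Type*} [Fintype r₁] [Fintype X] [Fintype r₂] [DecidableEq r₂]
    (G : r₁ → X → r₂ → ℝ) : ℝ :=
  ⨆ x : X, specNorm (Matrix.of fun α β => G α x β)

/-!
Fix `x`. For a node `k`, contracting the cores of the subtree rooted at `k` while keeping the bond
`α_k` open gives a vector `v_k ∈ ℝ^{r_k}`, and the tree structure yields the recursion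
`v_k = M_kᵀ (⊗_{w ∈ C(k)} v_w)` with `M_k = G_k(·, x_k, ·)`. The Euclidean norm of an elementary
tensor is the product of the norms, so `‖v_k‖ ≤ ⦀G_k⦀ ∏_w ‖v_w‖`, and by induction on the tree
`‖v_k‖` is at most the product of `⦀G_j⦀` over the subtree of `k`. Since `r_{r₀} = 1`, `p(x)` is
the single entry of `v_{r₀}`.
-/

open Finset Function

section PinnedSums

variable {ι : Type*} [Fintype ι] [DecidableEq ι] {κ : ι → Type*} [∀ i, Fintype (κ i)]
  {R : Type*} [CommSemiring R] (β : ∀ i, κ i)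

/-- Partial assignments on `S`, encoded inside the full product type by freezing the other
coordinates to `β`. -/
def pinnedOutside (S : Finset ι) : Finset (∀ i, κ i) := {α | ∀ i ∉ S, α i = β i}

variable {β}

lemma mem_pinnedOutside {S : Finset ι} {α : ∀ i, κ i} :
    α ∈ pinnedOutside β S ↔ ∀ i ∉ S, α i = β i := by
  simp [pinnedOutside]

lemma pinnedOutside_empty : pinnedOutside β ∅ = {β} := by
  ext α
  simp [mem_pinnedOutside, funext_iff]

lemma pinnedOutside_univ : pinnedOutside β univ = univ := by
  ext α
  simp [mem_pinnedOutside]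

lemma sum_pinnedOutside_insert {M : Type*} [AddCommMonoid M] {j : ι} {S : Finset ι} (hj : j ∉ S)
    (f : (∀ i, κ i) → M) :
    ∑ α ∈ pinnedOutside β (insert j S), f α
      = ∑ c, ∑ α ∈ pinnedOutside β S, f (update α j c) := by
  rw [sum_comm, ← sum_product']
  refine sum_nbij' (fun α => (update α j (β j), α j)) (fun p => update p.1 j p.2)
    ?_ ?_ ?_ ?_ ?_
  · intro α hα
    simp only [mem_product, mem_univ, and_true, mem_pinnedOutside] at hα ⊢
    intro i hi
    rcases eq_or_ne i j with rfl | hij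
    · simp
    · rw [update_of_ne hij]
      exact hα i (by simp [hij, hi])
  · rintro ⟨α, c⟩ hα
    simp only [mem_product, mem_univ, and_true, mem_pinnedOutside, mem_insert, not_or] at hα ⊢
    intro i hi
    rw [update_of_ne hi.1]
    exact hα i hi.2
  · intro α _
    simp
  · rintro ⟨α, c⟩ hα
    simp only [mem_product, mem_univ, and_true, mem_pinnedOutside] at hα
    simp [← hα j hj]
  · intro α _
    simp

lemma sum_pinnedOutside_union_mul {S S' : Finset ι} (h : Disjoint S S')
    {f g : (∀ i, κ i) → R} (hf : DependsOn f S) (hg : DependsOn g S') :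
    ∑ α ∈ pinnedOutside β (S ∪ S'), f α * g α
      = (∑ α ∈ pinnedOutside β S, f α) * ∑ α ∈ pinnedOutside β S', g α := by
  induction S using Finset.induction_on generalizing f with
  | empty =>
    have hconst : ∀ α, f α = f β := fun α => hf fun i hi => by simp at hi
    simp [pinnedOutside_empty, hconst, mul_sum]
  | @insert j S hjS ih =>
    have hjS' : j ∉ S' := disjoint_left.1 h (mem_insert_self j S)
    have hupdate : ∀ c, DependsOn (fun α => f (update α j c)) S := by
      intro c α α' hαα'
      refine hf fun i hi => ?_
      rcases eq_or_ne i j with rfl | hij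
      · simp
      · simpa [hij] using hαα' i (by simpa [hij] using hi)
    have hg_update : ∀ c α, g (update α j c) = g α :=
      fun c α => hg fun i hi => update_of_ne (ne_of_mem_of_not_mem hi hjS') _ _
    rw [insert_union, sum_pinnedOutside_insert (by simp [hjS, hjS']),
      sum_pinnedOutside_insert hjS, sum_mul]
    simp only [hg_update]
    exact sum_congr rfl fun c _ => ih (disjoint_of_subset_left (subset_insert j S) h) (hupdate c)

lemma sum_pinnedOutside_biUnion_prod {γ : Type*} [DecidableEq γ] {s : Finset γ} {B : γ → Finset ι}
    (hB : (s : Set γ).PairwiseDisjoint B) {F : γ → (∀ i, κ i) → R}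
    (hF : ∀ c ∈ s, DependsOn (F c) (B c)) :
    ∑ α ∈ pinnedOutside β (s.biUnion B), ∏ c ∈ s, F c α
      = ∏ c ∈ s, ∑ α ∈ pinnedOutside β (B c), F c α := by
  induction s using Finset.induction_on with
  | empty => simp [pinnedOutside_empty]
  | @insert c s hcs ih =>
    rw [coe_insert, Set.pairwiseDisjoint_insert_of_notMem (by simpa using hcs)] at hB
    have hdisj : Disjoint (B c) (s.biUnion B) :=
      (disjoint_biUnion_right _ _ _).2 fun c' hc' => hB.2 c' hc'
    have hprod : DependsOn (fun α => ∏ c' ∈ s, F c' α) (s.biUnion B) := by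
      intro α α' h
      exact prod_congr rfl fun c' hc' =>
        hF c' (mem_insert_of_mem hc') fun i hi => h i (mem_biUnion.2 ⟨c', hc', hi⟩)
    simp only [biUnion_insert, prod_insert hcs]
    rw [sum_pinnedOutside_union_mul hdisj (hF c (mem_insert_self c s)) hprod,
      ih hB.1 fun c' hc' => hF c' (mem_insert_of_mem hc')]

end PinnedSums

namespace ParentTree

variable {d : ℕ} (T : ParentTree d)

def subtree (k : Fin d) : Finset (Fin d) := {v | ∃ m, T.parent^[m] v = k}

variable {T}

lemma mem_subtree {k v : Fin d} : v ∈ T.subtree k ↔ ∃ m, T.parent^[m] v = k := by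
  simp [subtree]

lemma self_mem_subtree (k : Fin d) : k ∈ T.subtree k := mem_subtree.2 ⟨0, rfl⟩

lemma subtree_root : T.subtree T.root = univ :=
  eq_univ_of_forall fun v => mem_subtree.2 (T.reaches_root v)

lemma eq_root_of_isPeriodicPt {v : Fin d} {m : ℕ} (hm : 0 < m)
    (hv : IsPeriodicPt T.parent m v) : v = T.root := by
  obtain ⟨M, hM⟩ := T.reaches_root v
  have hle : M ≤ m * (M + 1) := by nlinarith
  calc v = T.parent^[m * (M + 1)] v := ((hv.mul_const (M + 1)).eq).symm
    _ = T.parent^[m * (M + 1) - M] (T.parent^[M] v) := by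
      rw [← iterate_add_apply, Nat.sub_add_cancel hle]
    _ = T.root := by rw [hM, iterate_fixed T.parent_root]

lemma mem_subtree_of_parent_mem {k v : Fin d} (h : T.parent v ∈ T.subtree k) :
    v ∈ T.subtree k := by
  obtain ⟨m, hm⟩ := mem_subtree.1 h
  exact mem_subtree.2 ⟨m + 1, by rwa [iterate_succ_apply]⟩

lemma subtree_subset_of_parent_eq {k w : Fin d} (h : T.parent w = k) :
    T.subtree w ⊆ T.subtree k := by
  intro v hv
  obtain ⟨m, hm⟩ := mem_subtree.1 hv
  exact mem_subtree.2 ⟨m + 1, by rw [iterate_succ_apply', hm, h]⟩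

lemma notMem_subtree_of_mem_children {k w : Fin d} (hw : w ∈ T.children k) :
    k ∉ T.subtree w := by
  intro hk
  obtain ⟨m, hm⟩ := mem_subtree.1 hk
  have hper : IsPeriodicPt T.parent (m + 1) w := by
    rw [IsPeriodicPt, IsFixedPt, iterate_succ_apply, hw.2.2, hm]
  exact hw.1 (eq_root_of_isPeriodicPt m.succ_pos hper)

lemma subtree_ssubset_of_mem_children {k w : Fin d} (hw : w ∈ T.children k) :
    T.subtree w ⊂ T.subtree k :=
  ssubset_of_subset_of_ne (subtree_subset_of_parent_eq hw.2.2) fun h =>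
    notMem_subtree_of_mem_children hw (h ▸ self_mem_subtree k)

lemma mem_subtree_or_mem_subtree {a b v : Fin d} (ha : v ∈ T.subtree a)
    (hb : v ∈ T.subtree b) : a ∈ T.subtree b ∨ b ∈ T.subtree a := by
  obtain ⟨m, rfl⟩ := mem_subtree.1 ha
  obtain ⟨m', rfl⟩ := mem_subtree.1 hb
  rcases le_total m m' with h | h
  · obtain ⟨t, rfl⟩ := Nat.exists_eq_add_of_le' h
    exact Or.inl (mem_subtree.2 ⟨t, (iterate_add_apply _ _ _ _).symm⟩)
  · obtain ⟨t, rfl⟩ := Nat.exists_eq_add_of_le' h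
    exact Or.inr (mem_subtree.2 ⟨t, (iterate_add_apply _ _ _ _).symm⟩)

lemma notMem_subtree_of_siblings {k w w' : Fin d} (hw : w ∈ T.children k)
    (hw' : w' ∈ T.children k) (hne : w ≠ w') : w ∉ T.subtree w' := by
  intro h
  obtain ⟨m, hm⟩ := mem_subtree.1 h
  cases m with
  | zero => exact hne hm
  | succ t =>
    rw [iterate_succ_apply, hw.2.2] at hm
    exact notMem_subtree_of_mem_children hw' (mem_subtree.2 ⟨t, hm⟩)

lemma pairwiseDisjoint_subtree_children (k : Fin d) :
    ((univ : Finset (T.children k)) : Set (T.children k)).PairwiseDisjoint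
      fun w => T.subtree w := by
  intro w _ w' _ hne
  refine disjoint_left.2 fun v hv hv' => ?_
  have hne' : (w : Fin d) ≠ w' := Subtype.coe_ne_coe.2 hne
  rcases mem_subtree_or_mem_subtree hv hv' with h | h
  · exact notMem_subtree_of_siblings w.2 w'.2 hne' h
  · exact notMem_subtree_of_siblings w'.2 w.2 hne'.symm h

lemma subtree_eq_insert_biUnion (k : Fin d) :
    T.subtree k = insert k ((univ : Finset (T.children k)).biUnion fun w => T.subtree w) := by
  refine Subset.antisymm (fun v hv => ?_) (insert_subset (self_mem_subtree k)
    (biUnion_subset.2 fun w _ => subtree_subset_of_parent_eq w.2.2.2))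
  obtain ⟨m, hm⟩ := mem_subtree.1 hv
  simp only [mem_insert, mem_biUnion, mem_univ, true_and, Subtype.exists]
  induction m generalizing v with
  | zero => exact Or.inl hm
  | succ m ih =>
    rw [iterate_succ_apply] at hm
    rcases ih (T.parent v) (mem_subtree.2 ⟨m, hm⟩) hm with hk | ⟨w, hw, hvw⟩
    · by_cases hvk : v = k
      · exact Or.inl hvk
      by_cases hvr : v = T.root
      · exact Or.inl (by rw [← hk, hvr, T.parent_root])
      · exact Or.inr ⟨v, ⟨hvr, hvk, hk⟩, self_mem_subtree v⟩
    · exact Or.inr ⟨w, hw, mem_subtree_of_parent_mem hvw⟩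

lemma prod_subtree {M : Type*} [CommMonoid M] (f : Fin d → M) (k : Fin d) :
    ∏ j ∈ T.subtree k, f j = f k * ∏ w : T.children k, ∏ j ∈ T.subtree w, f j := by
  rw [subtree_eq_insert_biUnion, prod_insert, prod_biUnion (pairwiseDisjoint_subtree_children k)]
  simpa using fun w hw => notMem_subtree_of_mem_children hw

end ParentTree

open scoped Matrix.Norms.L2Operator Matrix

lemma EuclideanSpace.norm_toLp_prod_apply {ι : Type*} [Fintype ι] [DecidableEq ι]
    {κ : ι → Type*} [∀ i, Fintype (κ i)] (v : ∀ i, EuclideanSpace ℝ (κ i)) :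
    ‖(WithLp.toLp 2 fun b : (∀ i, κ i) => ∏ i, v i (b i) : EuclideanSpace ℝ (∀ i, κ i))‖
      = ∏ i, ‖v i‖ := by
  refine (sq_eq_sq₀ (norm_nonneg _) (prod_nonneg fun i _ => norm_nonneg _)).1 ?_
  simp only [EuclideanSpace.real_norm_sq_eq, ← prod_pow, Fintype.prod_sum]

lemma Matrix.l2_opNorm_transpose {m n : Type*} [Fintype m] [Fintype n] [DecidableEq m]
    [DecidableEq n] (A : Matrix m n ℝ) : ‖Aᵀ‖ = ‖A‖ := by
  simpa using A.l2_opNorm_conjTranspose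

lemma specNorm_le_tnorm {r₁ X r₂ : Type*} [Fintype r₁] [Fintype X] [Fintype r₂]
    [DecidableEq r₂] (G : r₁ → X → r₂ → ℝ) (y : X) :
    specNorm (Matrix.of fun α β => G α y β) ≤ tnorm G :=
  le_ciSup (f := fun y => specNorm (Matrix.of fun α β => G α y β)) (Set.finite_range _).bddAbove y

section TTNS

variable {d : ℕ} {T : ParentTree d} {n r : Fin d → ℕ}
  (G : ∀ k : Fin d, ((w : T.children k) → Fin (r w.1)) → Fin (n k) → Fin (r k) → ℝ)
  (x : ∀ i, Fin (n i))

def coreEntry (k : Fin d) (α : ∀ j, Fin (r j)) : ℝ := G k (fun w => α w) (x k) (α k)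

lemma dependsOn_prod_coreEntry_subtree (w : Fin d) :
    DependsOn (fun α => ∏ j ∈ T.subtree w, coreEntry G x j α) (T.subtree w) := by
  intro α α' h
  refine prod_congr rfl fun j hj => ?_
  have hchild : ∀ u : T.children j, α u = α' u := fun u =>
    h u (ParentTree.mem_subtree_of_parent_mem (by rwa [u.2.2.2]))
  simp only [coreEntry, h j hj, funext hchild]

def subtreeVec (pin : ∀ j, Fin (r j)) (k : Fin d) : EuclideanSpace ℝ (Fin (r k)) :=
  WithLp.toLp 2 fun a => ∑ α ∈ pinnedOutside pin (T.subtree k),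
    if α k = a then ∏ j ∈ T.subtree k, coreEntry G x j α else 0

variable (pin : ∀ j, Fin (r j))

lemma subtreeVec_apply (k : Fin d) (a : Fin (r k)) :
    subtreeVec G x pin k a
      = ∑ b, G k b (x k) a * ∏ w : T.children k, subtreeVec G x pin w (b w) := by
  set D := (univ : Finset (T.children k)).biUnion fun w => T.subtree w
  have hkD : k ∉ D := by
    simpa [D] using fun w hw => ParentTree.notMem_subtree_of_mem_children hw
  have hcore : ∀ α, coreEntry G x k (update α k a) = G k (fun w => α w) (x k) a := by
    intro α
    simp only [coreEntry, update_self]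
    congr
    funext w
    exact update_of_ne w.2.2.1 _ _
  have hrest : ∀ α (w : T.children k), ∏ j ∈ T.subtree w, coreEntry G x j (update α k a)
      = ∏ j ∈ T.subtree w, coreEntry G x j α :=
    fun α w => dependsOn_prod_coreEntry_subtree G x w fun i hi =>
      update_of_ne (ne_of_mem_of_not_mem hi (ParentTree.notMem_subtree_of_mem_children w.2)) _ _
  -- Expanding `G k` over the child bonds `b` turns the summand into one factor per child subtree.
  have hdelta : ∀ α, G k (fun w => α w) (x k) a * ∏ w : T.children k,
      ∏ j ∈ T.subtree w, coreEntry G x j α = ∑ b, G k b (x k) a * ∏ w : T.children k,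
        if α w = b w then ∏ j ∈ T.subtree w, coreEntry G x j α else 0 := by
    intro α
    simp only [Fintype.prod_ite_zero, mul_ite, mul_zero, ← funext_iff]
    rw [Fintype.sum_ite_eq]
  calc subtreeVec G x pin k a
      = ∑ α ∈ pinnedOutside pin D, coreEntry G x k (update α k a) *
          ∏ w : T.children k, ∏ j ∈ T.subtree w, coreEntry G x j (update α k a) := by
        simp only [subtreeVec, ParentTree.prod_subtree (T := T) _ k]
        rw [ParentTree.subtree_eq_insert_biUnion k, sum_pinnedOutside_insert hkD, sum_comm]
        simp [D]
    _ = ∑ α ∈ pinnedOutside pin D, ∑ b, G k b (x k) a * ∏ w : T.children k,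
          if α w = b w then ∏ j ∈ T.subtree w, coreEntry G x j α else 0 := by
        simp only [hcore, hrest, hdelta]
    _ = ∑ b, G k b (x k) a * ∏ w : T.children k, subtreeVec G x pin w (b w) := by
        rw [sum_comm]
        refine sum_congr rfl fun b _ => ?_
        rw [← mul_sum,
          sum_pinnedOutside_biUnion_prod (ParentTree.pairwiseDisjoint_subtree_children k)]
        · rfl
        · intro w _ α α' h
          simp only [h w (ParentTree.self_mem_subtree (T := T) w.1),
            dependsOn_prod_coreEntry_subtree G x w h]

lemma norm_subtreeVec_le (k : Fin d) :
    ‖subtreeVec G x pin k‖ ≤ ∏ j ∈ T.subtree k, tnorm (G j) := by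
  set M : Matrix ((w : T.children k) → Fin (r w)) (Fin (r k)) ℝ :=
    Matrix.of fun b a => G k b (x k) a
  set u : EuclideanSpace ℝ ((w : T.children k) → Fin (r w)) :=
    WithLp.toLp 2 fun b => ∏ w : T.children k, subtreeVec G x pin w (b w)
  have hvec : subtreeVec G x pin k = (EuclideanSpace.equiv _ ℝ).symm (Mᵀ *ᵥ u) := by
    ext a
    rw [subtreeVec_apply]
    rfl
  calc ‖subtreeVec G x pin k‖
      ≤ ‖Mᵀ‖ * ‖u‖ := hvec ▸ Matrix.l2_opNorm_mulVec _ _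
    _ = specNorm M * ∏ w : T.children k, ‖subtreeVec G x pin w‖ := by
      rw [Matrix.l2_opNorm_transpose, EuclideanSpace.norm_toLp_prod_apply]
      rfl
    _ ≤ tnorm (G k) * ∏ w : T.children k, ∏ j ∈ T.subtree w, tnorm (G j) :=
      mul_le_mul (specNorm_le_tnorm (G k) (x k))
        (prod_le_prod (fun w _ => norm_nonneg _) fun w _ => norm_subtreeVec_le w)
        (prod_nonneg fun w _ => norm_nonneg _)
        ((norm_nonneg _).trans (specNorm_le_tnorm (G k) (x k)))
    _ = ∏ j ∈ T.subtree k, tnorm (G j) := (ParentTree.prod_subtree (fun j => tnorm (G j)) k).symm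
termination_by (T.subtree k).card
decreasing_by exact card_lt_card (ParentTree.subtree_ssubset_of_mem_children w.2)

lemma ttnsContract_eq_sum_subtreeVec_root :
    ttnsContract T n r G x = ∑ a, subtreeVec G x pin T.root a := by
  simp only [ttnsContract, subtreeVec, ParentTree.subtree_root, pinnedOutside_univ]
  rw [sum_comm]
  simp [coreEntry]

end TTNS

theorem ttns_sup_norm_le_prod_tnorm_general {d : ℕ} (T : ParentTree d) (n r : Fin d → ℕ)
    (hr : ∀ w, 1 ≤ r w) (hroot : r T.root = 1)
    (G : ∀ k : Fin d, ((w : T.children k) → Fin (r w.1)) → Fin (n k) → Fin (r k) → ℝ) :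
    ∀ x : ∀ i, Fin (n i), |ttnsContract T n r G x| ≤ ∏ k : Fin d, tnorm (G k) := by
  intro x
  let pin : ∀ j, Fin (r j) := fun j => ⟨0, hr j⟩
  have : Subsingleton (Fin (r T.root)) := Fin.subsingleton_iff_le_one.2 hroot.le
  calc |ttnsContract T n r G x|
      = ‖subtreeVec G x pin T.root (pin T.root)‖ := by
        rw [ttnsContract_eq_sum_subtreeVec_root G x pin, Fintype.sum_subsingleton _ (pin T.root),
          Real.norm_eq_abs]
    _ ≤ ‖subtreeVec G x pin T.root‖ := PiLp.norm_apply_le _ _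
    _ ≤ ∏ j ∈ T.subtree T.root, tnorm (G j) := norm_subtreeVec_le G x pin T.root
    _ = ∏ k, tnorm (G k) := by rw [ParentTree.subtree_root]

/-- `‖p‖_∞ ≤ ∏_k ⦀G_k⦀` for a TTNS contraction `p` of cores `G_k`,
each core being viewed as a 3-tensor with middle index `x_k`. -/
theorem ttns_sup_norm_le_prod_tnorm {d : ℕ} (T : ParentTree d) (n r : Fin d → ℕ)
    (hn : ∀ k, 1 ≤ n k) (hr : ∀ w, 1 ≤ r w) (hroot : r T.root = 1)
    (G : ∀ k : Fin d, ((w : T.children k) → Fin (r w.1)) → Fin (n k) → Fin (r k) → ℝ) :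
    ∀ x : ∀ i, Fin (n i), |ttnsContract T n r G x| ≤ ∏ k : Fin d, tnorm (G k) :=
  ttns_sup_norm_le_prod_tnorm_general T n r hr hroot G
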